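/- Let A be a compact infinite metric space and fix N ≥ 2. For each s > 0 let ω_N^s be an N-point configuration minimizing the unweighted Riesz s-energy over N-point subsets of A, and suppose ν_N ∈ A^N is a cluster point of (ω_N^s)_{s>0} as s → ∞ (i.e., ω_N^{s_j} → ν_N in the product topology on A^N for some sequence s_j → ∞). Then ν_N is an N-point best-packing configuration on A, i.e., δ(ν_N) = δ_N(A). -/

import Mathlib

open Metric MeasureTheory Filter
open scoped ENNReal NNReal

noncomputable section

variable {A : Type*} [MetricSpace A]

/-- The separation distance `δ(ω_N)` of a configuration of `N` points. -/
def sepDist {N : ℕ} (x : Fin N → A) : ℝ :=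
  sInf {d : ℝ | ∃ i j : Fin N, i ≠ j ∧ d = dist (x i) (x j)}

/-- The mesh norm (covering radius) `ρ(ω_N, K)` of a configuration with respect to `K`. -/
def meshNorm {N : ℕ} (x : Fin N → A) (K : Set A) : ℝ :=
  sSup {d : ℝ | ∃ y ∈ K, d = ⨅ i : Fin N, dist y (x i)}

/-- The weighted Riesz `(s,w)`-energy of a configuration. -/
def rieszEnergy {N : ℕ} (s : ℝ) (w : A → A → ℝ) (x : Fin N → A) : ℝ :=
  ∑ i : Fin N, ∑ j : Fin N, if i = j then 0 else w (x i) (x j) / dist (x i) (x j) ^ s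

/-- `x` is an `N`-point `(s,w)`-energy minimizing configuration on `K`. -/
def IsEnergyMinimizer {N : ℕ} (s : ℝ) (w : A → A → ℝ) (K : Set A) (x : Fin N → A) : Prop :=
  Function.Injective x ∧ (∀ i, x i ∈ K) ∧
    ∀ y : Fin N → A, Function.Injective y → (∀ i, y i ∈ K) →
      rieszEnergy s w x ≤ rieszEnergy s w y

/-- The `N`-point best-packing distance `δ_N(K)`. -/
def bestPackingDist (K : Set A) (N : ℕ) : ℝ :=
  sSup {d : ℝ | ∃ x : Fin N → A, Function.Injective x ∧ (∀ i, x i ∈ K) ∧ d = sepDist x}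

/-- The `N`-point mesh norm `ρ_N(K)`. -/
def meshNormN (K : Set A) (N : ℕ) : ℝ :=
  sInf {d : ℝ | ∃ x : Fin N → A, Function.Injective x ∧ (∀ i, x i ∈ K) ∧ d = meshNorm x K}

/-- The minimal `N`-point `(s,w)`-energy `𝓔_s^w(N,K)`. -/
def minEnergy (s : ℝ) (w : A → A → ℝ) (K : Set A) (N : ℕ) : ℝ :=
  sInf {E : ℝ | ∃ x : Fin N → A, Function.Injective x ∧ (∀ i, x i ∈ K) ∧ E = rieszEnergy s w x}

/-- `μ` is upper `α`-regular with constant `C₀`. -/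
def IsUpperRegular [MeasurableSpace A] (μ : Measure A) (α C₀ : ℝ) : Prop :=
  ∀ (x : A) (r : ℝ), 0 < r → r ≤ diam (Set.univ : Set A) →
    μ (closedBall x r) ≤ ENNReal.ofReal (C₀ * r ^ α)

/-- `μ` is lower `α`-regular with constant `c₀`. -/
def IsLowerRegular [MeasurableSpace A] (μ : Measure A) (α c₀ : ℝ) : Prop :=
  ∀ (x : A) (r : ℝ), 0 < r → r ≤ diam (Set.univ : Set A) →
    ENNReal.ofReal (c₀⁻¹ * r ^ α) ≤ μ (closedBall x r)

/-- `w` is an SLP weight on `K`: symmetric, lower semi-continuous on `K × K`,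
nonnegative, and positive on the diagonal. -/
def IsSLPWeight (w : A → A → ℝ) (K : Set A) : Prop :=
  (∀ x ∈ K, ∀ y ∈ K, 0 ≤ w x y) ∧
  (∀ x ∈ K, ∀ y ∈ K, w x y = w y x) ∧
  LowerSemicontinuousOn (fun p : A × A => w p.1 p.2) (K ×ˢ K) ∧
  (∀ x ∈ K, 0 < w x x)

/-!
If `y` is any injective configuration and `x` minimizes the Riesz `s`-energy, then
`δ(x)^{-s} ≤ E_s(x) ≤ E_s(y) ≤ N² δ(y)^{-s}`, i.e. `δ(y) ≤ N^{2/s} δ(x)`. Along minimizers with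
`s → ∞` the factor `N^{2/s}` tends to `1` and `δ` passes to the limit through the pairwise
distances, so the limit separates at least as well as every competitor; in particular its
separation is positive, so its points are distinct and it is itself a competitor.
-/

open Topology

section

variable {N : ℕ}

theorem sepDist_le_dist (x : Fin N → A) {i j : Fin N} (h : i ≠ j) :
    sepDist x ≤ dist (x i) (x j) :=
  csInf_le ⟨0, by rintro d ⟨i, j, -, rfl⟩; exact dist_nonneg⟩ ⟨i, j, h, rfl⟩

theorem exists_sepDist_eq_dist (hN : 2 ≤ N) (x : Fin N → A) :
    ∃ i j : Fin N, i ≠ j ∧ sepDist x = dist (x i) (x j) := by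
  have hfin : {d : ℝ | ∃ i j : Fin N, i ≠ j ∧ d = dist (x i) (x j)}.Finite := by
    refine ((Set.finite_univ (α := Fin N × Fin N)).image
      fun p => dist (x p.1) (x p.2)).subset ?_
    rintro d ⟨i, j, -, rfl⟩
    exact ⟨(i, j), trivial, rfl⟩
  have hne : {d : ℝ | ∃ i j : Fin N, i ≠ j ∧ d = dist (x i) (x j)}.Nonempty :=
    ⟨_, ⟨0, by omega⟩, ⟨1, by omega⟩, by simp [Fin.ext_iff], rfl⟩
  exact hne.csInf_mem hfin

theorem sepDist_pos (hN : 2 ≤ N) {x : Fin N → A} (hx : Function.Injective x) :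
    0 < sepDist x := by
  obtain ⟨i, j, hij, h⟩ := exists_sepDist_eq_dist hN x
  exact h ▸ dist_pos.2 (hx.ne hij)

theorem injective_of_sepDist_pos {x : Fin N → A} (hx : 0 < sepDist x) :
    Function.Injective x := by
  intro i j h
  by_contra hij
  have := sepDist_le_dist x hij
  rw [h, dist_self] at this
  linarith

theorem inv_rpow_sepDist_le_rieszEnergy (hN : 2 ≤ N) (s : ℝ) (x : Fin N → A) :
    (sepDist x ^ s)⁻¹ ≤ rieszEnergy s (fun _ _ => 1) x := by
  obtain ⟨i, j, hij, h⟩ := exists_sepDist_eq_dist hN x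
  have hterm : ∀ k l : Fin N,
      0 ≤ if k = l then (0 : ℝ) else 1 / dist (x k) (x l) ^ s := by
    intro k l
    split_ifs <;> positivity
  calc (sepDist x ^ s)⁻¹
      = if i = j then (0 : ℝ) else 1 / dist (x i) (x j) ^ s := by
        rw [if_neg hij, h, one_div]
    _ ≤ ∑ l, if i = l then (0 : ℝ) else 1 / dist (x i) (x l) ^ s :=
        Finset.single_le_sum (fun l _ => hterm i l) (Finset.mem_univ j)
    _ ≤ rieszEnergy s (fun _ _ => 1) x :=
        Finset.single_le_sum (f := fun k => ∑ l, if k = l then (0 : ℝ) else _)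
          (fun k _ => Finset.sum_nonneg fun l _ => hterm k l) (Finset.mem_univ i)

theorem rieszEnergy_le_sq_div {s : ℝ} (hs : 0 ≤ s) {y : Fin N → A} (hy : 0 < sepDist y) :
    rieszEnergy s (fun _ _ => 1) y ≤ (N : ℝ) ^ 2 / sepDist y ^ s := by
  have hterm : ∀ k l : Fin N,
      (if k = l then (0 : ℝ) else 1 / dist (y k) (y l) ^ s) ≤ 1 / sepDist y ^ s := by
    intro k l
    split_ifs with hkl
    · positivity
    · exact one_div_le_one_div_of_le (by positivity)
        (Real.rpow_le_rpow hy.le (sepDist_le_dist y hkl) hs)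
  calc rieszEnergy s (fun _ _ => 1) y
      ≤ ∑ _k : Fin N, ∑ _l : Fin N, 1 / sepDist y ^ s :=
        Finset.sum_le_sum fun k _ => Finset.sum_le_sum fun l _ => hterm k l
    _ = (N : ℝ) ^ 2 / sepDist y ^ s := by
        simp only [Finset.sum_const, Finset.card_univ, Fintype.card_fin, nsmul_eq_mul]
        ring

theorem sepDist_le_of_isEnergyMinimizer (hN : 2 ≤ N) {s : ℝ} (hs : 0 < s) {K : Set A}
    {x y : Fin N → A} (hx : IsEnergyMinimizer s (fun _ _ => 1) K x)
    (hy : Function.Injective y) (hyK : ∀ i, y i ∈ K) :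
    sepDist y ≤ ((N : ℝ) ^ 2) ^ s⁻¹ * sepDist x := by
  obtain ⟨hx_inj, -, hx_min⟩ := hx
  have ha := sepDist_pos hN hx_inj
  have hb := sepDist_pos hN hy
  have hE : (sepDist x ^ s)⁻¹ ≤ (N : ℝ) ^ 2 / sepDist y ^ s :=
    (inv_rpow_sepDist_le_rieszEnergy hN s x).trans
      ((hx_min y hy hyK).trans (rieszEnergy_le_sq_div hs.le hb))
  have hpow : sepDist y ^ s ≤ (N : ℝ) ^ 2 * sepDist x ^ s := by
    rw [inv_le_iff_one_le_mul₀ (by positivity), div_mul_eq_mul_div,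
      le_div_iff₀ (by positivity), one_mul] at hE
    linarith
  calc sepDist y = (sepDist y ^ s) ^ s⁻¹ := (Real.rpow_rpow_inv hb.le hs.ne').symm
    _ ≤ ((N : ℝ) ^ 2 * sepDist x ^ s) ^ s⁻¹ :=
        Real.rpow_le_rpow (by positivity) hpow (inv_nonneg.2 hs.le)
    _ = ((N : ℝ) ^ 2) ^ s⁻¹ * sepDist x := by
        rw [Real.mul_rpow (by positivity) (by positivity), Real.rpow_rpow_inv ha.le hs.ne']

theorem tendsto_const_rpow_inv_atTop {c : ℝ} (hc : 0 < c) :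
    Tendsto (fun s : ℝ => c ^ s⁻¹) atTop (𝓝 1) := by
  simpa [Function.comp_def] using
    ((Real.continuousAt_const_rpow hc.ne').tendsto (x := 0)).comp tendsto_inv_atTop_zero

theorem sepDist_le_of_tendsto_isEnergyMinimizer {ι : Type*} {l : Filter ι} [l.NeBot]
    (hN : 2 ≤ N) {K : Set A} {s : ι → ℝ} {x : ι → Fin N → A} {ν : Fin N → A}
    (hx : ∀ᶠ j in l, IsEnergyMinimizer (s j) (fun _ _ => 1) K (x j))
    (hs : Tendsto s l atTop) (hxν : Tendsto x l (𝓝 ν))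
    {y : Fin N → A} (hy : Function.Injective y) (hyK : ∀ i, y i ∈ K) :
    sepDist y ≤ sepDist ν := by
  obtain ⟨i, k, hik, hν⟩ := exists_sepDist_eq_dist hN ν
  have hlim : Tendsto (fun j => ((N : ℝ) ^ 2) ^ (s j)⁻¹ * dist (x j i) (x j k)) l
      (𝓝 (1 * dist (ν i) (ν k))) :=
    ((tendsto_const_rpow_inv_atTop (by positivity)).comp hs).mul
      ((tendsto_pi_nhds.1 hxν i).dist (tendsto_pi_nhds.1 hxν k))
  rw [hν, ← one_mul (dist (ν i) (ν k))]
  refine ge_of_tendsto hlim ((hx.and (hs.eventually_gt_atTop 0)).mono ?_)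
  rintro j ⟨hxj, hsj⟩
  exact (sepDist_le_of_isEnergyMinimizer hN hsj hxj hy hyK).trans
    (mul_le_mul_of_nonneg_left (sepDist_le_dist (x j) hik) (by positivity))

end

theorem stmt_14_general {A : Type*} [MetricSpace A] [Infinite A]
    (N : ℕ) (hN : 2 ≤ N) (ω : ℝ → Fin N → A)
    (hω : ∀ s : ℝ, 0 < s → IsEnergyMinimizer s (fun _ _ => (1 : ℝ)) Set.univ (ω s))
    (ν : Fin N → A) (sj : ℕ → ℝ)
    (hsj : Tendsto sj atTop atTop)
    (hconv : Tendsto (fun j => ω (sj j)) atTop (nhds ν)) :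
    sepDist ν = bestPackingDist (Set.univ : Set A) N := by
  have hbest : ∀ y : Fin N → A, Function.Injective y → sepDist y ≤ sepDist ν := fun y hy =>
    sepDist_le_of_tendsto_isEnergyMinimizer hN
      ((hsj.eventually_gt_atTop 0).mono fun j hj => hω (sj j) hj) hsj hconv hy fun _ => trivial
  obtain ⟨y₀, hy₀⟩ : ∃ y : Fin N → A, Function.Injective y :=
    ⟨_, (Fin.valEmbedding.trans (Infinite.natEmbedding A)).injective⟩
  have hν : Function.Injective ν :=
    injective_of_sepDist_pos ((sepDist_pos hN hy₀).trans_le (hbest y₀ hy₀))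
  rw [bestPackingDist, eq_comm]
  refine IsGreatest.csSup_eq ⟨⟨ν, hν, fun _ => trivial, rfl⟩, ?_⟩
  rintro d ⟨y, hy, -, rfl⟩
  exact hbest y hy

/-- any cluster point (as `s → ∞`, in the product topology on `A^N`)
of minimal Riesz `s`-energy configurations is an `N`-point best-packing configuration. -/
theorem stmt_14 {A : Type*} [MetricSpace A] [CompactSpace A] [Infinite A]
    (N : ℕ) (hN : 2 ≤ N) (ω : ℝ → Fin N → A)
    (hω : ∀ s : ℝ, 0 < s → IsEnergyMinimizer s (fun _ _ => (1 : ℝ)) Set.univ (ω s))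
    (ν : Fin N → A) (sj : ℕ → ℝ) (hsj0 : ∀ j, 0 < sj j)
    (hsj : Tendsto sj atTop atTop)
    (hconv : Tendsto (fun j => ω (sj j)) atTop (nhds ν)) :
    sepDist ν = bestPackingDist (Set.univ : Set A) N :=
  stmt_14_general N hN ω hω ν sj hsj hconv
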